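/- For n ≥ 2, the map π : GL_n(ℂ) → ℂⁿ∖{0} sending a matrix M to its last column M·eₙ is a locally trivial fiber bundle with fiber GL_{n−1}(ℂ) × ℂ^{n−1}: every v₀ ∈ ℂⁿ∖{0} has an open neighborhood U and a homeomorphism π⁻¹(U) ≅ U × (GL_{n−1}(ℂ) × ℂ^{n−1}) commuting with the projections to U. -/

import Mathlib

/-- The general linear group `GL n ℂ`, realized as the subspace of invertible
matrices in `Matrix (Fin n) (Fin n) ℂ`. -/
abbrev GLC (n : ℕ) : Type := {A : Matrix (Fin n) (Fin n) ℂ // IsUnit A}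

open Matrix

namespace LCFB

variable {m : ℕ}

def blk (B : Matrix (Fin (m + 1)) (Fin (m + 1)) ℂ) (c : Fin (m + 1) → ℂ) :
    Matrix (Fin (m + 2)) (Fin (m + 2)) ℂ :=
  Fin.snoc (fun i => Fin.snoc (B i) 0) (Fin.snoc c 1)

@[simp] lemma blk_cc (B : Matrix (Fin (m + 1)) (Fin (m + 1)) ℂ) (c : Fin (m + 1) → ℂ)
    (i j : Fin (m + 1)) : blk B c i.castSucc j.castSucc = B i j := by
  simp [blk]

@[simp] lemma blk_cl (B : Matrix (Fin (m + 1)) (Fin (m + 1)) ℂ) (c : Fin (m + 1) → ℂ)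
    (i : Fin (m + 1)) : blk B c i.castSucc (Fin.last (m + 1)) = 0 := by
  simp [blk]

@[simp] lemma blk_lc (B : Matrix (Fin (m + 1)) (Fin (m + 1)) ℂ) (c : Fin (m + 1) → ℂ)
    (j : Fin (m + 1)) : blk B c (Fin.last (m + 1)) j.castSucc = c j := by
  simp [blk]

@[simp] lemma blk_ll (B : Matrix (Fin (m + 1)) (Fin (m + 1)) ℂ) (c : Fin (m + 1) → ℂ) :
    blk B c (Fin.last (m + 1)) (Fin.last (m + 1)) = 1 := by
  simp [blk]

lemma blk_col (B : Matrix (Fin (m + 1)) (Fin (m + 1)) ℂ) (c : Fin (m + 1) → ℂ)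
    (k : Fin (m + 2)) :
    blk B c k (Fin.last (m + 1)) = if k = Fin.last (m + 1) then 1 else 0 := by
  induction k using Fin.lastCases with
  | last => simp
  | cast k => simp [(Fin.castSucc_lt_last k).ne]

lemma blk_mul (B B' : Matrix (Fin (m + 1)) (Fin (m + 1)) ℂ) (c c' : Fin (m + 1) → ℂ) :
    blk B c * blk B' c' = blk (B * B') (B'.vecMul c + c') := by
  ext i j
  rw [Matrix.mul_apply, Fin.sum_univ_castSucc]
  induction i using Fin.lastCases with
  | last =>
    induction j using Fin.lastCases with
    | last => simp
    | cast j => simp [Matrix.vecMul, dotProduct, Matrix.mul_apply]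
  | cast i =>
    induction j using Fin.lastCases with
    | last => simp
    | cast j => simp [Matrix.mul_apply]

lemma blk_one : (blk 1 0 : Matrix (Fin (m + 2)) (Fin (m + 2)) ℂ) = 1 := by
  ext i j
  induction i using Fin.lastCases with
  | last =>
    induction j using Fin.lastCases with
    | last => simp
    | cast j => simp [Matrix.one_apply, ((Fin.castSucc_lt_last j).ne).symm]
  | cast i =>
    induction j using Fin.lastCases with
    | last => simp [Matrix.one_apply, (Fin.castSucc_lt_last i).ne]
    | cast j =>
      simp [Matrix.one_apply, Fin.castSucc_inj]

/-- Top-left `(m+1) × (m+1)` block. -/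
def top (N : Matrix (Fin (m + 2)) (Fin (m + 2)) ℂ) : Matrix (Fin (m + 1)) (Fin (m + 1)) ℂ :=
  fun i j => N i.castSucc j.castSucc

/-- First `m+1` entries of the last row. -/
def bot (N : Matrix (Fin (m + 2)) (Fin (m + 2)) ℂ) : Fin (m + 1) → ℂ :=
  fun j => N (Fin.last (m + 1)) j.castSucc

@[simp] lemma top_blk (B : Matrix (Fin (m + 1)) (Fin (m + 1)) ℂ) (c : Fin (m + 1) → ℂ) :
    top (blk B c) = B := by
  ext i j; simp [top]

@[simp] lemma bot_blk (B : Matrix (Fin (m + 1)) (Fin (m + 1)) ℂ) (c : Fin (m + 1) → ℂ) :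
    bot (blk B c) = c := by
  ext j; simp [bot]

lemma blk_top_bot (N : Matrix (Fin (m + 2)) (Fin (m + 2)) ℂ)
    (h : ∀ i, N i (Fin.last (m + 1)) = if i = Fin.last (m + 1) then 1 else 0) :
    blk (top N) (bot N) = N := by
  ext i j
  induction i using Fin.lastCases with
  | last =>
    induction j using Fin.lastCases with
    | last => simp [h]
    | cast j => simp [bot]
  | cast i =>
    induction j using Fin.lastCases with
    | last => simp [h, (Fin.castSucc_lt_last i).ne]
    | cast j => simp [top]

lemma isUnit_blk {B : Matrix (Fin (m + 1)) (Fin (m + 1)) ℂ} (hB : IsUnit B)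
    (c : Fin (m + 1) → ℂ) : IsUnit (blk B c) := by
  obtain ⟨u, rfl⟩ := hB
  rw [Matrix.isUnit_iff_isUnit_det]
  set W : Matrix (Fin (m + 1)) (Fin (m + 1)) ℂ := ↑u⁻¹ with hW
  have h : blk (u : Matrix (Fin (m + 1)) (Fin (m + 1)) ℂ) c * blk W (-(W.vecMul c)) = 1 := by
    rw [blk_mul]
    have h1 : (u : Matrix (Fin (m + 1)) (Fin (m + 1)) ℂ) * W = 1 := by
      rw [hW]; exact u.mul_inv
    rw [h1, add_neg_cancel, blk_one]
  have := congrArg Matrix.det h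
  rw [Matrix.det_mul, Matrix.det_one] at this
  exact IsUnit.of_mul_eq_one _ this

lemma isUnit_top {N : Matrix (Fin (m + 2)) (Fin (m + 2)) ℂ} (hN : IsUnit N)
    (h : ∀ i, N i (Fin.last (m + 1)) = if i = Fin.last (m + 1) then 1 else 0) :
    IsUnit (top N) := by
  obtain ⟨u, hu⟩ := hN
  set V : Matrix (Fin (m + 2)) (Fin (m + 2)) ℂ := ↑u⁻¹ with hV
  have hNV : N * V = 1 := by rw [← hu, hV]; exact u.mul_inv
  have hVN : V * N = 1 := by rw [← hu, hV]; exact u.inv_mul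
  have hVcol : ∀ i, V i (Fin.last (m + 1)) = if i = Fin.last (m + 1) then 1 else 0 := by
    intro i
    have h1 : V i (Fin.last (m + 1)) = (V * N) i (Fin.last (m + 1)) := by
      rw [Matrix.mul_apply]
      simp [h, mul_ite]
    rw [h1, hVN, Matrix.one_apply]
  have e1 : blk (top N) (bot N) * blk (top V) (bot V) = 1 := by
    rw [blk_top_bot N h, blk_top_bot V hVcol, hNV]
  rw [blk_mul, ← blk_one] at e1
  have h1 : top N * top V = 1 := by
    have := congrArg top e1
    rwa [top_blk, top_blk] at this
  have := congrArg Matrix.det h1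
  rw [Matrix.det_mul, Matrix.det_one] at this
  exact Matrix.isUnit_iff_isUnit_det _ |>.mpr (IsUnit.of_mul_eq_one _ this)

/-- A matrix with last column `v`, whose other columns are standard basis
vectors avoiding position `i₀`; invertible whenever `v i₀ ≠ 0`. -/
def sig (i₀ : Fin (m + 2)) (v : Fin (m + 2) → ℂ) : Matrix (Fin (m + 2)) (Fin (m + 2)) ℂ :=
  ((1 : Matrix (Fin (m + 2)) (Fin (m + 2)) ℂ).updateCol i₀ v).submatrix id
    (Equiv.swap (Fin.last (m + 1)) i₀)

lemma sig_last_col (i₀ : Fin (m + 2)) (v : Fin (m + 2) → ℂ) (i : Fin (m + 2)) :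
    sig i₀ v i (Fin.last (m + 1)) = v i := by
  simp [sig, Matrix.submatrix_apply, Equiv.swap_apply_left, Matrix.updateCol_apply]

lemma det_sig (i₀ : Fin (m + 2)) (v : Fin (m + 2) → ℂ) :
    (sig i₀ v).det = (Equiv.Perm.sign (Equiv.swap (Fin.last (m + 1)) i₀) : ℂ) * v i₀ := by
  rw [sig, Matrix.det_permute']
  congr 1
  rw [← Matrix.cramer_apply]
  rw [Matrix.cramer_one]
  rfl

lemma isUnit_sig {i₀ : Fin (m + 2)} {v : Fin (m + 2) → ℂ} (hv : v i₀ ≠ 0) :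
    IsUnit (sig i₀ v) := by
  rw [Matrix.isUnit_iff_isUnit_det, det_sig, isUnit_iff_ne_zero]
  refine mul_ne_zero ?_ hv
  have : ((Equiv.Perm.sign (Equiv.swap (Fin.last (m + 1)) i₀) : ℤ) : ℂ) ≠ 0 := by
    exact_mod_cast (Equiv.Perm.sign (Equiv.swap (Fin.last (m + 1)) i₀)).ne_zero
  exact_mod_cast this

/-- Explicit continuous formula for the inverse of `sig i₀ v`. -/
noncomputable def sigInv (i₀ : Fin (m + 2)) (v : Fin (m + 2) → ℂ) :
    Matrix (Fin (m + 2)) (Fin (m + 2)) ℂ :=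
  ((sig i₀ v).det)⁻¹ • (sig i₀ v).adjugate

lemma sigInv_eq (i₀ : Fin (m + 2)) (v : Fin (m + 2) → ℂ) : sigInv i₀ v = (sig i₀ v)⁻¹ := by
  rw [Matrix.inv_def, Ring.inverse_eq_inv]; rfl

lemma sigInv_mul {i₀ : Fin (m + 2)} {v : Fin (m + 2) → ℂ} (hv : v i₀ ≠ 0) :
    sigInv i₀ v * sig i₀ v = 1 := by
  rw [sigInv_eq]
  exact Matrix.nonsing_inv_mul _ ((Matrix.isUnit_iff_isUnit_det _).mp (isUnit_sig hv))

lemma mul_sigInv {i₀ : Fin (m + 2)} {v : Fin (m + 2) → ℂ} (hv : v i₀ ≠ 0) :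
    sig i₀ v * sigInv i₀ v = 1 := by
  rw [sigInv_eq]
  exact Matrix.mul_nonsing_inv _ ((Matrix.isUnit_iff_isUnit_det _).mp (isUnit_sig hv))

lemma isUnit_sigInv {i₀ : Fin (m + 2)} {v : Fin (m + 2) → ℂ} (hv : v i₀ ≠ 0) :
    IsUnit (sigInv i₀ v) := by
  have h := congrArg Matrix.det (sigInv_mul hv)
  rw [Matrix.det_mul, Matrix.det_one] at h
  exact (Matrix.isUnit_iff_isUnit_det _).mpr (IsUnit.of_mul_eq_one _ h)

lemma continuous_sig (i₀ : Fin (m + 2)) :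
    Continuous fun v : Fin (m + 2) → ℂ => sig i₀ v := by
  apply continuous_matrix
  intro i j
  simp only [sig, Matrix.submatrix_apply, Matrix.updateCol_apply, id_eq]
  exact (continuous_apply i).if_const _ continuous_const

lemma continuous_blk :
    Continuous fun q : Matrix (Fin (m + 1)) (Fin (m + 1)) ℂ × (Fin (m + 1) → ℂ) =>
      blk q.1 q.2 := by
  apply continuous_matrix
  intro i j
  induction i using Fin.lastCases with
  | last =>
    induction j using Fin.lastCases with
    | last => simp only [blk_ll]; exact continuous_const
    | cast j =>
      simp only [blk_lc]
      exact (continuous_apply j).comp continuous_snd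
  | cast i =>
    induction j using Fin.lastCases with
    | last => simp only [blk_cl]; exact continuous_const
    | cast j =>
      simp only [blk_cc]
      exact (continuous_fst.matrix_elem i j)

def U (i₀ : Fin (m + 2)) : Set (Fin (m + 2) → ℂ) := {v | v i₀ ≠ 0}

lemma col_sigInv_mul {i₀ : Fin (m + 2)} {M : Matrix (Fin (m + 2)) (Fin (m + 2)) ℂ}
    (hv : M i₀ (Fin.last (m + 1)) ≠ 0) (i : Fin (m + 2)) :
    (sigInv i₀ (fun k => M k (Fin.last (m + 1))) * M) i (Fin.last (m + 1)) =
      if i = Fin.last (m + 1) then 1 else 0 := by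
  have h1 : (sigInv i₀ (fun k => M k (Fin.last (m + 1))) * M) i (Fin.last (m + 1)) =
      (sigInv i₀ (fun k => M k (Fin.last (m + 1))) *
        sig i₀ (fun k => M k (Fin.last (m + 1)))) i (Fin.last (m + 1)) := by
    rw [Matrix.mul_apply, Matrix.mul_apply]
    exact Finset.sum_congr rfl fun k _ => by rw [sig_last_col]
  rw [h1, sigInv_mul (i₀ := i₀) (v := fun k => M k (Fin.last (m + 1))) hv, Matrix.one_apply]

lemma col_sig_mul_blk (i₀ : Fin (m + 2)) (v : Fin (m + 2) → ℂ)
    (B : Matrix (Fin (m + 1)) (Fin (m + 1)) ℂ) (c : Fin (m + 1) → ℂ) (i : Fin (m + 2)) :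
    (sig i₀ v * blk B c) i (Fin.last (m + 1)) = v i := by
  rw [Matrix.mul_apply]
  have h1 : ∀ k, sig i₀ v i k * blk B c k (Fin.last (m + 1)) =
      if k = Fin.last (m + 1) then sig i₀ v i k else 0 := by
    intro k; rw [blk_col]; split <;> simp
  rw [Finset.sum_congr rfl fun k _ => h1 k, Finset.sum_ite_eq']
  simp [sig_last_col]

/-- The total space over `U i₀`. -/
abbrev Xt (m : ℕ) (i₀ : Fin (m + 2)) : Type :=
  {M : GLC (m + 2) //
    (fun i => (M.1 : Matrix (Fin (m + 2)) (Fin (m + 2)) ℂ) i (Fin.last (m + 1))) ∈ U i₀}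

lemma fwd_isUnit {i₀ : Fin (m + 2)}
    (M : {M : GLC (m + 2) //
      (fun i => (M.1 : Matrix (Fin (m + 2)) (Fin (m + 2)) ℂ) i (Fin.last (m + 1))) ∈ U i₀}) :
    IsUnit (top (sigInv i₀
      (fun i => (M.1.1 : Matrix (Fin (m + 2)) (Fin (m + 2)) ℂ) i (Fin.last (m + 1))) * M.1.1)) := by
  have hv : (fun i => (M.1.1 : Matrix (Fin (m + 2)) (Fin (m + 2)) ℂ) i (Fin.last (m + 1))) i₀ ≠ 0 :=
    M.2
  exact isUnit_top
    ((isUnit_sigInv (i₀ := i₀) (v := fun i => M.1.1 i (Fin.last (m + 1))) hv).mul M.1.2)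
    (col_sigInv_mul (i₀ := i₀) (M := M.1.1) hv)

noncomputable def fwd (m : ℕ) (i₀ : Fin (m + 2)) :
    Xt m i₀ → (U i₀ × (GLC (m + 1) × (Fin (m + 1) → ℂ))) := fun M =>
  (⟨fun i => M.1.1 i (Fin.last (m + 1)), M.2⟩,
   ⟨⟨top (sigInv i₀ (fun i => M.1.1 i (Fin.last (m + 1))) * M.1.1), fwd_isUnit M⟩,
    bot (sigInv i₀ (fun i => M.1.1 i (Fin.last (m + 1))) * M.1.1)⟩)

noncomputable def bwd (m : ℕ) (i₀ : Fin (m + 2)) :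
    (U i₀ × (GLC (m + 1) × (Fin (m + 1) → ℂ))) → Xt m i₀ := fun p =>
  ⟨⟨sig i₀ p.1.1 * blk p.2.1.1 p.2.2, (isUnit_sig p.1.2).mul (isUnit_blk p.2.1.2 _)⟩,
   by
    show (sig i₀ p.1.1 * blk p.2.1.1 p.2.2) i₀ (Fin.last (m + 1)) ≠ 0
    rw [col_sig_mul_blk]
    exact p.1.2⟩

lemma linv (m : ℕ) (i₀ : Fin (m + 2)) : Function.LeftInverse (bwd m i₀) (fwd m i₀) := by
  intro M
  apply Subtype.ext
  apply Subtype.ext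
  show sig i₀ (fun i => M.1.1 i (Fin.last (m + 1))) *
      blk (top (sigInv i₀ (fun i => M.1.1 i (Fin.last (m + 1))) * M.1.1))
        (bot (sigInv i₀ (fun i => M.1.1 i (Fin.last (m + 1))) * M.1.1)) = M.1.1
  have hv : (fun i => (M.1.1 : Matrix (Fin (m + 2)) (Fin (m + 2)) ℂ) i (Fin.last (m + 1))) i₀ ≠ 0 :=
    M.2
  rw [blk_top_bot _ (col_sigInv_mul (i₀ := i₀) (M := M.1.1) hv), ← Matrix.mul_assoc,
    mul_sigInv (i₀ := i₀) (v := fun i => M.1.1 i (Fin.last (m + 1))) hv, Matrix.one_mul]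

lemma rinv (m : ℕ) (i₀ : Fin (m + 2)) : Function.RightInverse (bwd m i₀) (fwd m i₀) := by
  rintro ⟨⟨v, hv⟩, ⟨⟨B, hB⟩, c⟩⟩
  have hvcol : (fun i => (sig i₀ v * blk B c) i (Fin.last (m + 1))) = v :=
    funext fun i => col_sig_mul_blk i₀ v B c i
  have key : sigInv i₀ (fun i => (sig i₀ v * blk B c) i (Fin.last (m + 1))) *
      (sig i₀ v * blk B c) = blk B c := by
    rw [hvcol, ← Matrix.mul_assoc, sigInv_mul (i₀ := i₀) (v := v) (show v i₀ ≠ 0 from hv),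
      Matrix.one_mul]
  refine Prod.ext ?_ (Prod.ext ?_ ?_)
  · exact Subtype.ext hvcol
  · refine Subtype.ext ?_
    show top (sigInv i₀ (fun i => (sig i₀ v * blk B c) i (Fin.last (m + 1))) *
      (sig i₀ v * blk B c)) = B
    rw [key, top_blk]
  · show bot (sigInv i₀ (fun i => (sig i₀ v * blk B c) i (Fin.last (m + 1))) *
      (sig i₀ v * blk B c)) = c
    rw [key, bot_blk]

lemma continuous_fwd (m : ℕ) (i₀ : Fin (m + 2)) : Continuous (fwd m i₀) := by
  have hval : Continuous fun M : Xt m i₀ =>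
      (M.1.1 : Matrix (Fin (m + 2)) (Fin (m + 2)) ℂ) :=
    continuous_subtype_val.comp continuous_subtype_val
  have hv : Continuous fun M : Xt m i₀ => (fun i => M.1.1 i (Fin.last (m + 1))) :=
    continuous_pi fun i => hval.matrix_elem i (Fin.last (m + 1))
  have hsig : Continuous fun M : Xt m i₀ =>
      sig i₀ (fun i => M.1.1 i (Fin.last (m + 1))) := (continuous_sig i₀).comp hv
  have hdetne : ∀ M : Xt m i₀,
      (sig i₀ (fun i => M.1.1 i (Fin.last (m + 1)))).det ≠ 0 := fun M => by
    rw [← isUnit_iff_ne_zero, ← Matrix.isUnit_iff_isUnit_det]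
    exact isUnit_sig M.2
  have hsigInv : Continuous fun M : Xt m i₀ =>
      sigInv i₀ (fun i => M.1.1 i (Fin.last (m + 1))) :=
    (hsig.matrix_det.inv₀ hdetne).smul hsig.matrix_adjugate
  have hN : Continuous fun M : Xt m i₀ =>
      sigInv i₀ (fun i => M.1.1 i (Fin.last (m + 1))) * M.1.1 := hsigInv.matrix_mul hval
  have htop : Continuous fun M : Xt m i₀ =>
      top (sigInv i₀ (fun i => M.1.1 i (Fin.last (m + 1))) * M.1.1) :=
    continuous_matrix fun i j => hN.matrix_elem _ _
  have hbot : Continuous fun M : Xt m i₀ =>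
      bot (sigInv i₀ (fun i => M.1.1 i (Fin.last (m + 1))) * M.1.1) :=
    continuous_pi fun j => hN.matrix_elem _ _
  exact (hv.subtype_mk _).prodMk ((htop.subtype_mk _).prodMk hbot)

lemma continuous_bwd (m : ℕ) (i₀ : Fin (m + 2)) : Continuous (bwd m i₀) := by
  have hfst : Continuous fun p : U i₀ × (GLC (m + 1) × (Fin (m + 1) → ℂ)) =>
      (p.1.1 : Fin (m + 2) → ℂ) := continuous_subtype_val.comp continuous_fst
  have hB : Continuous fun p : U i₀ × (GLC (m + 1) × (Fin (m + 1) → ℂ)) =>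
      (p.2.1.1 : Matrix (Fin (m + 1)) (Fin (m + 1)) ℂ) :=
    continuous_subtype_val.comp (continuous_fst.comp continuous_snd)
  have hc : Continuous fun p : U i₀ × (GLC (m + 1) × (Fin (m + 1) → ℂ)) => p.2.2 :=
    continuous_snd.comp continuous_snd
  have hmat : Continuous fun p : U i₀ × (GLC (m + 1) × (Fin (m + 1) → ℂ)) =>
      sig i₀ p.1.1 * blk p.2.1.1 p.2.2 :=
    ((continuous_sig i₀).comp hfst).matrix_mul (continuous_blk.comp (hB.prodMk hc))
  exact (hmat.subtype_mk _).subtype_mk _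

theorem main (m : ℕ) (i₀ : Fin (m + 2)) :
    ∃ e : Xt m i₀ ≃ₜ (U i₀ × (GLC (m + 1) × (Fin (m + 1) → ℂ))),
      ∀ M, ((e M).1 : Fin (m + 2) → ℂ) =
        fun i => (M.1.1 : Matrix (Fin (m + 2)) (Fin (m + 2)) ℂ) i (Fin.last (m + 1)) :=
  ⟨⟨⟨fwd m i₀, bwd m i₀, linv m i₀, rinv m i₀⟩, continuous_fwd m i₀, continuous_bwd m i₀⟩,
    fun _ => rfl⟩

end LCFB

/-- The last column `M · eₙ` of an `n × n` matrix. -/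
noncomputable def lastColumn (n : ℕ) (h : 0 < n) (M : Matrix (Fin n) (Fin n) ℂ) : Fin n → ℂ :=
  M.mulVec (Pi.single (⟨n - 1, by omega⟩ : Fin n) 1)

/-- For `n ≥ 2`, the map `GL n ℂ → ℂⁿ ∖ {0}` sending a matrix to its last column is a
locally trivial fiber bundle with fiber `GL (n-1) ℂ × ℂ^{n-1}`: every nonzero `v₀` has an
open neighborhood `U` (contained in the nonzero vectors) over which the preimage is
homeomorphic to `U × (GL (n-1) ℂ × ℂ^{n-1})`, compatibly with the projections to `U`. -/
theorem lastColumn_fiber_bundle (n : ℕ) (hn : 2 ≤ n)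
    (v₀ : Fin n → ℂ) (hv₀ : v₀ ≠ 0) :
    ∃ U : Set (Fin n → ℂ), IsOpen U ∧ v₀ ∈ U ∧ (∀ v ∈ U, v ≠ 0) ∧
      ∃ e : {M : GLC n // lastColumn n (by omega) M.1 ∈ U} ≃ₜ
          (U × (GLC (n - 1) × (Fin (n - 1) → ℂ))),
        ∀ M, ((e M).1 : Fin n → ℂ) = lastColumn n (by omega) M.1.1 := by
  obtain ⟨m, rfl⟩ : ∃ m, n = m + 2 := ⟨n - 2, by omega⟩
  obtain ⟨i₀, hi₀⟩ : ∃ i, v₀ i ≠ 0 := by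
    by_contra h
    push_neg at h
    exact hv₀ (funext h)
  refine ⟨LCFB.U i₀, ?_, hi₀, ?_, ?_⟩
  · exact IsOpen.preimage (continuous_apply i₀) isOpen_ne
  · intro v hv h0
    exact hv (by rw [h0]; rfl)
  · have hlc : ∀ (h : 0 < m + 2) (M : Matrix (Fin (m + 2)) (Fin (m + 2)) ℂ),
        lastColumn (m + 2) h M = fun i => M i (Fin.last (m + 1)) := by
      intro h M
      funext i
      simp only [lastColumn, Matrix.mulVec_single, mul_one]
      simp only [MulOpposite.op_one, one_smul]
      rfl
    obtain ⟨e, he⟩ := LCFB.main m i₀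
    have hiff : ∀ M : GLC (m + 2),
        lastColumn (m + 2) (by omega) M.1 ∈ LCFB.U i₀ ↔
          (fun i => (M.1 : Matrix (Fin (m + 2)) (Fin (m + 2)) ℂ) i (Fin.last (m + 1))) ∈
            LCFB.U i₀ := fun M => by rw [hlc]
    let e₀ : {M : GLC (m + 2) // lastColumn (m + 2) (by omega) M.1 ∈ LCFB.U i₀} ≃ₜ
        LCFB.Xt m i₀ :=
      ⟨Equiv.subtypeEquivRight hiff,
        Continuous.subtype_mk continuous_subtype_val _,
        Continuous.subtype_mk continuous_subtype_val _⟩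
    refine ⟨e₀.trans e, fun M => ?_⟩
    rw [hlc]
    exact he (e₀ M)
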